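/- arXiv:2109.13465 — 7 statements merged into one kernel-verified Lean document; each statement's English description precedes it below -/
import Mathlib

section
/- In any orientation of a complete bipartite graph, if a vertex d pecks (has an arc to) a vertex k in the other partite set such that k has maximal out-degree among its partite set, then d has a directed path of length at most 3 to every vertex in the other partite set (i.e., d is a 3-Duke). -/
/-! Let `c` lie in the partite set of `k`. If `d` does not peck `c`, then `c` pecks `d`.
Were there no path `k → x → c`, then `c` would peck every out-neighbour of `k` and also `d`,
which `k` does not peck; so `c` would eclipse `k` and have strictly larger out-degree,
contradicting the choice of `k`. Hence `d → k → x → c`. -/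

/-- An orientation of a complete multipartite graph: vertices `V`, partite sets
given as fibers of `part : V → ι`, and `peck` the arc relation. Between any two
vertices in different partite sets there is exactly one arc, and there are no
arcs within a partite set. -/
structure MTour (V : Type*) (ι : Type*) where
  part : V → ι
  peck : V → V → Prop
  complete : ∀ u v, part u ≠ part v → peck u v ∨ peck v u
  inter : ∀ u v, peck u v → part u ≠ part v
  asymm : ∀ u v, peck u v → ¬ peck v u

namespace MTour

variable {V ι : Type*}

/-- There is a directed path of length at most `m` from `d` to `c`. -/
def hasPath (T : MTour V ι) (m : ℕ) (d c : V) : Prop :=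
  ∃ k ≤ m, ∃ f : ℕ → V, f 0 = d ∧ f k = c ∧ ∀ i < k, T.peck (f i) (f (i + 1))

/-- `d` is an `m`-Duke: every vertex in a different partite set is reachable
from `d` by a directed path of length at most `m`. -/
def isDuke (T : MTour V ι) (m : ℕ) (d : V) : Prop :=
  ∀ c, T.part c ≠ T.part d → T.hasPath m d c

/-- `d` is an `m`-King: every other vertex is reachable from `d` by a directed
path of length at most `m`. -/
def isKing (T : MTour V ι) (m : ℕ) (d : V) : Prop :=
  ∀ c, c ≠ d → T.hasPath m d c

/-- The out-degree of a vertex. -/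
noncomputable def outDeg (T : MTour V ι) (v : V) : ℕ :=
  Nat.card {w // T.peck v w}

/-- `e` eclipses `d`: same partite set, `e` pecks everything `d` pecks, and
at least one vertex `d` does not peck. -/
def eclipses (T : MTour V ι) (e d : V) : Prop :=
  T.part e = T.part d ∧ (∀ c, T.peck d c → T.peck e c) ∧ ∃ c, T.peck e c ∧ ¬ T.peck d c

/-- `d` is non-eclipsed: no vertex of its partite set eclipses it. -/
def nonEclipsed (T : MTour V ι) (d : V) : Prop :=
  ∀ e, ¬ T.eclipses e d

/-- Partite set `i` dominates partite set `j`: some vertex of `i` pecks all of `j`. -/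
def Dominates (T : MTour V ι) (i j : ι) : Prop :=
  ∃ v, T.part v = i ∧ ∀ w, T.part w = j → T.peck v w

variable (T : MTour V ι)

theorem hasPath_of_peck {m : ℕ} (hm : 1 ≤ m) {u v : V} (h : T.peck u v) :
    T.hasPath m u v :=
  ⟨1, hm, fun i => if i = 0 then u else v, rfl, rfl, by
    intro i hi
    obtain rfl : i = 0 := Nat.lt_one_iff.mp hi
    exact h⟩

theorem hasPath_of_peck_peck_peck {m : ℕ} (hm : 3 ≤ m) {u v w x : V}
    (huv : T.peck u v) (hvw : T.peck v w) (hwx : T.peck w x) : T.hasPath m u x :=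
  ⟨3, hm, fun i => match i with | 0 => u | 1 => v | 2 => w | _ => x, rfl, rfl, by
    intro i hi
    interval_cases i
    exacts [huv, hvw, hwx]⟩

theorem outDeg_lt_outDeg_of_eclipses [Finite V] {e d : V} (h : T.eclipses e d) :
    T.outDeg d < T.outDeg e := by
  obtain ⟨-, hsub, c, hec, hdc⟩ := h
  exact Set.ncard_lt_ncard ⟨hsub, fun hsup => hdc (hsup hec)⟩

theorem exists_peck_peck_of_not_eclipses {c d k : V} (hck : T.part c = T.part k)
    (hnot : ¬ T.eclipses c k) (hcd : T.peck c d) (hdk : T.peck d k) :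
    ∃ x, T.peck k x ∧ T.peck x c := by
  by_contra! hno
  refine hnot ⟨hck, fun x hkx => ?_, d, hcd, T.asymm d k hdk⟩
  have hxc : T.part x ≠ T.part c := hck ▸ (T.inter k x hkx).symm
  exact (T.complete x c hxc).resolve_left (hno x hkx)

end MTour

/-- In any bipartite tournament, if `d` pecks a vertex `k` of the other
partite set which has maximal out-degree within its own partite set, then
`d` is a 3-Duke. -/
theorem stmt0 {V : Type*} [Finite V] (T : MTour V Bool) (d k : V)
    (hdk : T.peck d k)
    (hprom : ∀ w, T.part w = T.part k → T.outDeg w ≤ T.outDeg k) :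
    T.isDuke 3 d := by
  intro c hcd
  have hck : T.part c = T.part k :=
    (Bool.eq_not_iff.mpr hcd).trans (Bool.eq_not_iff.mpr (T.inter d k hdk).symm).symm
  by_cases hdc : T.peck d c
  · exact T.hasPath_of_peck (by norm_num) hdc
  have hcd' : T.peck c d := (T.complete c d hcd).resolve_right hdc
  have hnot : ¬ T.eclipses c k := fun h =>
    (hprom c hck).not_gt (T.outDeg_lt_outDeg_of_eclipses h)
  obtain ⟨x, hkx, hxc⟩ := T.exists_peck_peck_of_not_eclipses hck hnot hcd' hdk
  exact T.hasPath_of_peck_peck_peck le_rfl hdk hkx hxc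
end

section
/- In any orientation of a complete bipartite graph in which the two partite sets are balanced (no vertex pecks all vertices of the other partite set), each partite set contains a 3-Duke. -/
/-- In a bipartite tournament with both partite sets nonempty which is
balanced (no vertex pecks all vertices of the other partite set), each
partite set contains a 3-Duke. -/
theorem stmt1 {V : Type*} [Finite V] (T : MTour V Bool)
    (hne : ∀ b : Bool, ∃ v, T.part v = b)
    (hbal : ¬ ∃ v, ∀ w, T.part w ≠ T.part v → T.peck v w) :
    ∀ b : Bool, ∃ d, T.part d = b ∧ T.isDuke 3 d := by
  classical
  intro b
  haveI := Fintype.ofFinite V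
  -- pick d of maximal out-degree in partite set b
  obtain ⟨d, hds, hmax⟩ := Finset.exists_max_image
    (Finset.univ.filter (fun v => T.part v = b)) T.outDeg
    (by obtain ⟨v, hv⟩ := hne b; exact ⟨v, by simp [hv]⟩)
  have hdb : T.part d = b := by simpa using hds
  refine ⟨d, hdb, ?_⟩
  intro c hc
  by_cases hdc : T.peck d c
  · exact ⟨1, by norm_num, fun i => if i = 0 then d else c, by simp, by simp,
      fun i hi => by interval_cases i <;> simpa⟩
  -- suppose no path of length ≤ 3
  by_contra hnp
  -- key claim: c pecks every vertex in d's partite set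
  have key : ∀ y, T.part y = T.part d → T.peck c y := by
    intro y hy
    have hyc : T.part y ≠ T.part c := fun h => hc (h.symm.trans hy)
    by_cases hstep : ∃ x, T.peck d x ∧ T.peck x y
    · -- if y pecked c there would be a path d → x → y → c
      obtain ⟨x, hdx, hxy⟩ := hstep
      rcases T.complete y c hyc with hyc' | h
      · exfalso; apply hnp
        refine ⟨3, le_refl 3,
          fun i => if i = 0 then d else if i = 1 then x else if i = 2 then y else c,
          by simp, by simp, ?_⟩
        intro i hi
        interval_cases i <;> simp [hdx, hxy, hyc']
      · exact h
    · -- y pecks all of N⁺(d); if y pecked c, y would beat d's out-degree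
      push_neg at hstep
      have hyall : ∀ x, T.peck d x → T.peck y x := by
        intro x hdx
        have hxy : T.part x ≠ T.part y := by
          have := T.inter d x hdx; rw [hy]; exact fun h => this h.symm
        rcases T.complete x y hxy with h | h
        · exact absurd h (hstep x hdx)
        · exact h
      rcases T.complete y c hyc with hyc' | h
      · -- contradiction with maximality of d's out-degree
        exfalso
        have hss : {w | T.peck d w} ⊂ {w | T.peck y w} := by
          constructor
          · intro w hw; exact hyall w hw
          · intro hsub
            exact hdc (hsub hyc')
        have hlt : T.outDeg d < T.outDeg y := by
          have h1 : T.outDeg d = {w | T.peck d w}.ncard := by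
            exact Nat.card_coe_set_eq _
          have h2 : T.outDeg y = {w | T.peck y w}.ncard := by
            exact Nat.card_coe_set_eq _
          rw [h1, h2]
          exact Set.ncard_lt_ncard hss (Set.toFinite _)
        have hyb : T.part y = b := hy.trans hdb
        have := hmax y (by simp [hyb])
        omega
      · exact h
  -- so c pecks everything in the other partite set, contradicting balance
  apply hbal
  refine ⟨c, fun w hw => ?_⟩
  apply key
  have : ∀ x y z : Bool, x ≠ z → y ≠ z → y = x := by decide
  exact this (T.part d) (T.part w) (T.part c) (Ne.symm hc) hw
end

section
/- In any orientation of a complete bipartite graph, either there exists a vertex with arcs to every vertex of the other partite set (a 1-Duke), or there exist at least four distinct vertices each of which is a 3-Duke. -/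
section Aux

variable {V : Type*} [Finite V] (T : MTour V Bool)

private lemma bool_eq_of_ne {x y z : Bool} (h1 : x ≠ z) (h2 : y ≠ z) : x = y := by
  revert h1 h2; cases x <;> cases y <;> cases z <;> decide

private lemma hasPath_one' {d c : V} (h : T.peck d c) {m : ℕ} (hm : 1 ≤ m) :
    T.hasPath m d c := by
  refine ⟨1, hm, fun n => if n = 0 then d else c, by simp, by simp, ?_⟩
  intro i hi
  interval_cases i
  simpa using h

private lemma hasPath_three {d b a c : V} (h1 : T.peck d b) (h2 : T.peck b a)
    (h3 : T.peck a c) : T.hasPath 3 d c := by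
  refine ⟨3, le_refl 3,
    fun n => match n with | 0 => d | 1 => b | 2 => a | _ => c, rfl, rfl, ?_⟩
  intro i hi
  interval_cases i <;> simpa

/-- If no 1-Duke exists, every vertex is pecked by someone. -/
private lemma exists_pecker (hnd : ¬ ∃ d, T.isDuke 1 d) (c : V) : ∃ a, T.peck a c := by
  by_contra h
  push_neg at h
  refine hnd ⟨c, ?_⟩
  intro v hv
  rcases T.complete c v (fun he => hv he.symm) with hp | hp
  · exact hasPath_one' T hp le_rfl
  · exact absurd hp (h v)

/-- Every vertex is "eclipse-dominated" by a non-eclipsed vertex of its part. -/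
private lemma exists_max (a : V) :
    ∃ m, T.part m = T.part a ∧ (∀ x, T.peck a x → T.peck m x) ∧ T.nonEclipsed m := by
  classical
  set S : Set V := {v | T.part v = T.part a ∧ ∀ x, T.peck a x → T.peck v x} with hS
  have haS : a ∈ S := ⟨rfl, fun _ h => h⟩
  obtain ⟨m, hmS, hmax⟩ : ∃ m ∈ S, ∀ e ∈ S, T.outDeg m ≤ T.outDeg e → T.outDeg m = T.outDeg e := by
    obtain ⟨m, hmS, hmax⟩ := Set.Finite.exists_maximalFor T.outDeg S (Set.toFinite S) ⟨a, haS⟩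
    exact ⟨m, hmS, fun e he h => le_antisymm h (hmax he h)⟩
  refine ⟨m, hmS.1, hmS.2, ?_⟩
  intro e ⟨hpart, hsub, ce, hce, hnce⟩
  have heS : e ∈ S := ⟨hpart.trans hmS.1, fun x hx => hsub x (hmS.2 x hx)⟩
  have hlt : T.outDeg m < T.outDeg e := by
    have hss : {w | T.peck m w} ⊂ {w | T.peck e w} :=
      ⟨fun x hx => hsub x hx, fun habs => hnce (habs hce)⟩
    have := Set.ncard_lt_ncard hss (Set.toFinite _)
    simp only [← Nat.card_coe_set_eq] at this
    exact this
  exact absurd (hmax e heS hlt.le) hlt.ne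

/-- Without a 1-Duke, every non-eclipsed vertex is a 3-Duke. -/
private lemma nonEclipsed_duke (hnd : ¬ ∃ d, T.isDuke 1 d) {d : V}
    (hd : T.nonEclipsed d) : T.isDuke 3 d := by
  intro c hc
  by_cases hdc : T.peck d c
  · exact hasPath_one' T hdc (by norm_num)
  by_contra hpath
  obtain ⟨a, ha⟩ := exists_pecker T hnd c
  have hpa : T.part a = T.part d := bool_eq_of_ne (T.inter a c ha) (Ne.symm hc)
  refine hd a ⟨hpa, ?_, c, ha, hdc⟩
  intro x hx
  have hxa : T.part x ≠ T.part a := fun h =>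
    (T.inter d x hx) ((hpa ▸ h).symm)
  rcases T.complete a x hxa.symm with h | h
  · exact h
  · exact absurd (hasPath_three T hx h ha) hpath

/-- Without a 1-Duke, each side contains two distinct non-eclipsed vertices. -/
private lemma two_nonEclipsed (hnd : ¬ ∃ d, T.isDuke 1 d)
    (hne : ∀ b : Bool, ∃ v, T.part v = b) (i : Bool) :
    ∃ m₁ m₂, m₁ ≠ m₂ ∧ T.part m₁ = i ∧ T.part m₂ = i ∧
      T.nonEclipsed m₁ ∧ T.nonEclipsed m₂ := by
  obtain ⟨a, ha⟩ := hne i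
  obtain ⟨m₁, hm₁p, _, hm₁⟩ := exists_max T a
  rw [ha] at hm₁p
  by_contra h
  push_neg at h
  have huniq : ∀ v, T.part v = i → T.nonEclipsed v → v = m₁ := by
    intro v hv hnev
    by_contra hvne
    exact (h m₁ v (Ne.symm hvne) hm₁p hv hm₁ hnev)
  refine hnd ⟨m₁, ?_⟩
  intro c hc
  obtain ⟨a', ha'⟩ := exists_pecker T hnd c
  have hpa' : T.part a' = i := by
    rw [hm₁p] at hc
    exact bool_eq_of_ne (T.inter a' c ha') (Ne.symm hc)
  obtain ⟨m, hmp, hmsub, hm⟩ := exists_max T a'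
  have : m = m₁ := huniq m (hmp.trans hpa') hm
  exact hasPath_one' T (this ▸ hmsub c ha') le_rfl

end Aux

/-- In any bipartite tournament (both partite sets nonempty), either there
is a 1-Duke or there are four distinct 3-Dukes. -/
theorem stmt3 {V : Type*} [Finite V] (T : MTour V Bool)
    (hne : ∀ b : Bool, ∃ v, T.part v = b) :
    (∃ d, T.isDuke 1 d) ∨
    ∃ d₁ d₂ d₃ d₄, d₁ ≠ d₂ ∧ d₁ ≠ d₃ ∧ d₁ ≠ d₄ ∧ d₂ ≠ d₃ ∧ d₂ ≠ d₄ ∧ d₃ ≠ d₄ ∧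
      T.isDuke 3 d₁ ∧ T.isDuke 3 d₂ ∧ T.isDuke 3 d₃ ∧ T.isDuke 3 d₄ := by
  by_cases hnd : ∃ d, T.isDuke 1 d
  · exact Or.inl hnd
  right
  obtain ⟨m₁, m₂, h12, hp1, hp2, hn1, hn2⟩ := two_nonEclipsed T hnd hne false
  obtain ⟨m₃, m₄, h34, hp3, hp4, hn3, hn4⟩ := two_nonEclipsed T hnd hne true
  have hcross : ∀ x y : V, T.part x = false → T.part y = true → x ≠ y := by
    intro x y hx hy hxy
    rw [hxy, hy] at hx
    exact Bool.noConfusion hx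
  exact ⟨m₁, m₂, m₃, m₄, h12, hcross m₁ m₃ hp1 hp3, hcross m₁ m₄ hp1 hp4,
    hcross m₂ m₃ hp2 hp3, hcross m₂ m₄ hp2 hp4, h34,
    nonEclipsed_duke T hnd hn1, nonEclipsed_duke T hnd hn2,
    nonEclipsed_duke T hnd hn3, nonEclipsed_duke T hnd hn4⟩
end

section
/- Every multipartite tournament contains a 3-Duke, i.e., a vertex d such that every vertex in a different partite set than d can be reached from d by a directed path of length at most 3. -/
namespace MTour

variable {V ι : Type*} (T : MTour V ι)

def reachTwo (v : V) : Set V :=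
  {x | T.peck v x ∨ ∃ y, T.peck v y ∧ T.peck y x}

variable {T}

lemma hasPath_self (m : ℕ) (v : V) : T.hasPath m v v :=
  ⟨0, Nat.zero_le m, fun _ => v, rfl, rfl, fun _ hi => absurd hi (Nat.not_lt_zero _)⟩

lemma hasPath.mono {m n : ℕ} {d c : V} (hmn : m ≤ n) (h : T.hasPath m d c) :
    T.hasPath n d c := by
  obtain ⟨k, hk, f, h0, hkc, hf⟩ := h
  exact ⟨k, hk.trans hmn, f, h0, hkc, hf⟩

lemma hasPath.snoc {m : ℕ} {d x c : V} (h : T.hasPath m d x) (hxc : T.peck x c) :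
    T.hasPath (m + 1) d c := by
  obtain ⟨k, hk, f, h0, hkx, hf⟩ := h
  refine ⟨k + 1, by omega, fun i => if i ≤ k then f i else c, by simpa using h0,
    by simp, fun i hi => ?_⟩
  rcases Nat.lt_succ_iff_lt_or_eq.mp hi with hik | rfl
  · simpa [hik.le, Nat.succ_le_of_lt hik] using hf i hik
  · simpa [hkx] using hxc

lemma peck_of_not_hasPath_succ {m : ℕ} {d x c : V} (hx : T.hasPath m d x)
    (hxc : T.part x ≠ T.part c) (hdc : ¬ T.hasPath (m + 1) d c) : T.peck c x :=
  (T.complete x c hxc).resolve_left fun h => hdc (hx.snoc h)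

lemma notMem_reachTwo_self (v : V) : v ∉ T.reachTwo v := by
  rintro (h | ⟨y, hvy, hyv⟩)
  · exact T.inter v v h rfl
  · exact T.asymm v y hvy hyv

lemma reachTwo_ssubset_of_not_hasPath {d c : V} (hcd : T.part c ≠ T.part d)
    (hdc : ¬ T.hasPath 3 d c) : T.reachTwo d ⊂ T.reachTwo c := by
  have hc_d : T.peck c d :=
    peck_of_not_hasPath_succ (hasPath_self 0 d) hcd.symm fun h => hdc (h.mono (by norm_num))
  refine LE.le.ssubset_of_mem_notMem ?_ (Or.inl hc_d) (notMem_reachTwo_self d)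
  rintro x (hdx | ⟨u, hdu, hux⟩)
  · exact Or.inr ⟨d, hc_d, hdx⟩
  have hpath_u : T.hasPath 1 d u := (hasPath_self 0 d).snoc hdu
  by_cases hu : T.part u = T.part c
  · refine Or.inl (peck_of_not_hasPath_succ (hpath_u.snoc hux) ?_ hdc)
    exact hu ▸ (T.inter u x hux).symm
  · exact Or.inr ⟨u, peck_of_not_hasPath_succ hpath_u hu
      fun h => hdc (h.mono (by norm_num)), hux⟩

end MTour

/-- Every (finite, nonempty) multipartite tournament contains a 3-Duke. -/
theorem stmt4 {V ι : Type*} [Finite V] [Nonempty V] (T : MTour V ι) :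
    ∃ d, T.isDuke 3 d := by
  obtain ⟨d, hmax⟩ := Finite.exists_max fun v => (T.reachTwo v).ncard
  refine ⟨d, fun c hcd => ?_⟩
  by_contra hdc
  exact (hmax c).not_gt <|
    Set.ncard_lt_ncard (MTour.reachTwo_ssubset_of_not_hasPath hcd hdc) (Set.toFinite _)
end

section
/- In any multipartite tournament, either there exists a 2-Duke, or there exist at least three distinct 3-Dukes. -/
namespace MTourAux

open MTour

variable {V ι : Type*}

/-- A path of length 1. -/
lemma hasPath_one (T : MTour V ι) {d c : V} {m : ℕ} (hm : 1 ≤ m) (h : T.peck d c) :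
    T.hasPath m d c := by
  refine ⟨1, hm, fun i => if i = 0 then d else c, by simp, by simp, ?_⟩
  intro i hi
  have hi0 : i = 0 := by omega
  subst hi0
  simpa using h

/-- A path of length 2. -/
lemma hasPath_two (T : MTour V ι) {d w c : V} {m : ℕ} (hm : 2 ≤ m)
    (h1 : T.peck d w) (h2 : T.peck w c) : T.hasPath m d c := by
  refine ⟨2, hm, fun i => if i = 0 then d else if i = 1 then w else c, by simp, by simp, ?_⟩
  intro i hi
  interval_cases i <;> simpa using ‹_›

/-- A path of length 3. -/
lemma hasPath_three (T : MTour V ι) {d w t c : V} {m : ℕ} (hm : 3 ≤ m)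
    (h1 : T.peck d w) (h2 : T.peck w t) (h3 : T.peck t c) : T.hasPath m d c := by
  refine ⟨3, hm, fun i => if i = 0 then d else if i = 1 then w else if i = 2 then t else c,
    by simp, by simp, ?_⟩
  intro i hi
  interval_cases i <;> simpa using ‹_›

lemma hasPath_mono (T : MTour V ι) {d c : V} {m m' : ℕ} (h : m ≤ m')
    (hp : T.hasPath m d c) : T.hasPath m' d c := by
  obtain ⟨k, hk, f, h0, hkc, hstep⟩ := hp
  exact ⟨k, hk.trans h, f, h0, hkc, hstep⟩

/-- From the failure of a 2-path, the target pecks back. -/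
lemma peck_back (T : MTour V ι) {v z : V} (hp : T.part z ≠ T.part v)
    (h2 : ¬ T.hasPath 2 v z) : T.peck z v := by
  rcases T.complete v z (fun h => hp h.symm) with h | h
  · exact absurd (hasPath_one T (by omega) h) h2
  · exact h

lemma not_peck_mid (T : MTour V ι) {v z t : V} (h2 : ¬ T.hasPath 2 v z)
    (hvt : T.peck v t) : ¬ T.peck t z := fun h => h2 (hasPath_two T le_rfl hvt h)

lemma outDeg_eq_ncard (T : MTour V ι) (v : V) :
    T.outDeg v = {t | T.peck v t}.ncard := by
  rw [MTour.outDeg, Set.ncard_def]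
  rfl

/-- Every vertex has a non-eclipsed "cover" in its own part that pecks everything
it pecks. -/
lemma exists_cover (T : MTour V ι) [Finite V] (z : V) :
    ∃ e, T.part e = T.part z ∧ (∀ t, T.peck z t → T.peck e t) ∧ T.nonEclipsed e := by
  classical
  set S : Set V := {e | T.part e = T.part z ∧ ∀ t, T.peck z t → T.peck e t} with hS
  have hzS : z ∈ S := ⟨rfl, fun _ h => h⟩
  obtain ⟨e, heS, hmax⟩ :=
    Set.Finite.exists_maximalFor T.outDeg S (Set.toFinite S) ⟨z, hzS⟩
  refine ⟨e, heS.1, heS.2, ?_⟩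
  intro f hf
  obtain ⟨hfp, hfsub, c₀, hfc, hec⟩ := hf
  have hfS : f ∈ S := ⟨hfp.trans heS.1, fun t ht => hfsub t (heS.2 t ht)⟩
  have hss : {t | T.peck e t} ⊂ {t | T.peck f t} :=
    ⟨fun t ht => hfsub t ht, fun hsup => hec (hsup hfc)⟩
  have hlt : T.outDeg e < T.outDeg f := by
    rw [outDeg_eq_ncard, outDeg_eq_ncard]
    exact Set.ncard_lt_ncard hss (Set.toFinite _)
  have := hmax hfS hlt.le
  omega

/-- Key lemma: if `v` pecks a non-eclipsed vertex `b`, then `v` reaches every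
vertex of `b`'s part within 3 steps. -/
lemma reach_part (T : MTour V ι) {v b c : V} (hb : T.nonEclipsed b)
    (hvb : T.peck v b) (hceq : T.part c = T.part b) : T.hasPath 3 v c := by
  by_cases hcb : c = b
  · subst hcb; exact hasPath_one T (by omega) hvb
  by_contra h3
  apply hb c
  refine ⟨hceq, ?_, v, ?_, fun hbv => T.asymm _ _ hvb hbv⟩
  · intro t hbt
    have hptc : ¬ T.peck t c := fun htc => h3 (hasPath_three T le_rfl hvb hbt htc)
    have hpt : T.part t ≠ T.part c := by
      rw [hceq]
      exact fun hh => (T.inter b t hbt) hh.symm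
    rcases T.complete t c hpt with h | h
    · exact absurd h hptc
    · exact h
  · have h1 : ¬ T.peck v c := fun h => h3 (hasPath_one T (by omega) h)
    have hpv : T.part v ≠ T.part c := by
      rw [hceq]; exact T.inter v b hvb
    rcases T.complete v c hpv with h | h
    · exact absurd h h1
    · exact h

/-- The set of parts "covered" by `u`: its own part, and the parts where it pecks a
non-eclipsed vertex. -/
def covSet (T : MTour V ι) (u : V) : Set ι :=
  {i | i = T.part u ∨ ∃ e, T.nonEclipsed e ∧ T.peck u e ∧ T.part e = i}

/-- `u` is saturated: every vertex not 2-reached lies in a covered part. -/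
def Sat (T : MTour V ι) (u : V) : Prop :=
  ∀ z, ¬ T.hasPath 2 u z → T.part z ∈ covSet T u

/-- A saturated vertex is a 3-duke. -/
lemma sat_isDuke (T : MTour V ι) {w : V} (hs : Sat T w) : T.isDuke 3 w := by
  intro c hc
  by_cases h2 : T.hasPath 2 w c
  · exact hasPath_mono T (by omega) h2
  · rcases hs c h2 with h | ⟨e, heNE, hwe, heeq⟩
    · exact absurd h hc
    · exact reach_part T heNE hwe heeq.symm

/-- Saturation process: iteratively enlarge the covered set. -/
lemma saturate (T : MTour V ι) [Finite V] :
    ∀ (n : ℕ) (u : V), T.nonEclipsed u →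
      (Set.range T.part \ covSet T u).ncard ≤ n →
      ∃ w, T.nonEclipsed w ∧ Sat T w ∧ ∀ t, T.nonEclipsed t → T.peck u t → T.peck w t := by
  intro n
  induction n with
  | zero =>
    intro u hu hm
    by_cases hs : Sat T u
    · exact ⟨u, hu, hs, fun t _ h => h⟩
    · exfalso
      rw [Sat, not_forall] at hs
      obtain ⟨z, hz⟩ := hs
      rw [Classical.not_imp] at hz
      obtain ⟨hz2, hzC⟩ := hz
      have hmem : T.part z ∈ Set.range T.part \ covSet T u := ⟨⟨z, rfl⟩, hzC⟩
      have hfin : (Set.range T.part \ covSet T u).Finite :=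
        (Set.finite_range T.part).subset Set.diff_subset
      have : 0 < (Set.range T.part \ covSet T u).ncard :=
        (Set.ncard_pos hfin).mpr ⟨_, hmem⟩
      omega
  | succ n ih =>
    intro u hu hm
    by_cases hs : Sat T u
    · exact ⟨u, hu, hs, fun t _ h => h⟩
    rw [Sat, not_forall] at hs
    obtain ⟨z, hz⟩ := hs
    rw [Classical.not_imp] at hz
    obtain ⟨hz2, hzC⟩ := hz
    have hpzu : T.part z ≠ T.part u := fun h => hzC (Or.inl h)
    have hzu : T.peck z u := peck_back T hpzu hz2
    obtain ⟨e, hep, hesub, heNE⟩ := exists_cover T z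
    have heu : T.peck e u := hesub u hzu
    -- any non-eclipsed vertex pecked by `u` is also pecked by `e`
    have htrans : ∀ t, T.nonEclipsed t → T.peck u t → T.peck e t := by
      intro t htNE hut
      have hti : T.part t ∈ covSet T u := Or.inr ⟨t, htNE, hut, rfl⟩
      have htz : T.part t ≠ T.part z := fun h => hzC (h ▸ hti)
      have hntz : ¬ T.peck t z := not_peck_mid T hz2 hut
      have hzt : T.peck z t := by
        rcases T.complete t z htz with h | h
        · exact absurd h hntz
        · exact h
      exact hesub t hzt
    -- the covered set grows
    have hg1 : covSet T u ⊆ covSet T e := by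
      rintro i (h | ⟨t, htNE, hut, hti⟩)
      · exact Or.inr ⟨u, hu, heu, h.symm⟩
      · exact Or.inr ⟨t, htNE, htrans t htNE hut, hti⟩
    have hg2 : T.part z ∈ covSet T e := Or.inl hep.symm
    have hfin : (Set.range T.part \ covSet T u).Finite :=
      (Set.finite_range T.part).subset Set.diff_subset
    have hmem : T.part z ∈ Set.range T.part \ covSet T u := ⟨⟨z, rfl⟩, hzC⟩
    have hsub2 : (Set.range T.part \ covSet T e) ⊆
        (Set.range T.part \ covSet T u) \ {T.part z} := by
      rintro i ⟨hir, hie⟩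
      exact ⟨⟨hir, fun h => hie (hg1 h)⟩, fun h => hie (by rw [Set.mem_singleton_iff] at h; rw [h]; exact hg2)⟩
    have hlt' : (Set.range T.part \ covSet T e).ncard ≤ n := by
      have h1 : (Set.range T.part \ covSet T e).ncard ≤
          ((Set.range T.part \ covSet T u) \ {T.part z}).ncard :=
        Set.ncard_le_ncard hsub2 (hfin.subset Set.diff_subset)
      have h2 : ((Set.range T.part \ covSet T u) \ {T.part z}).ncard <
          (Set.range T.part \ covSet T u).ncard :=
        Set.ncard_diff_singleton_lt_of_mem hmem hfin
      omega
    obtain ⟨w, hwNE, hwSat, hwanchor⟩ := ih e heNE hlt'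
    exact ⟨w, hwNE, hwSat, fun t htNE hut => hwanchor t htNE (htrans t htNE hut)⟩

end MTourAux

open MTourAux

/-- In any multipartite tournament, either there is a 2-Duke or there are
three distinct 3-Dukes. -/
theorem stmt6 {V ι : Type*} [Finite V] [Nonempty V] (T : MTour V ι) :
    (∃ d, T.isDuke 2 d) ∨
    ∃ d₁ d₂ d₃, d₁ ≠ d₂ ∧ d₁ ≠ d₃ ∧ d₂ ≠ d₃ ∧
      T.isDuke 3 d₁ ∧ T.isDuke 3 d₂ ∧ T.isDuke 3 d₃ := by
  by_cases h2 : ∃ d, T.isDuke 2 d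
  · exact Or.inl h2
  right
  push_neg at h2
  have hF : ∀ v : V, ∃ z, T.part z ≠ T.part v ∧ ¬ T.hasPath 2 v z := by
    intro v
    have hv := h2 v
    rw [MTour.isDuke] at hv
    push_neg at hv
    exact hv
  -- a saturated (hence 3-duke) vertex exists
  obtain ⟨v₀⟩ := (inferInstance : Nonempty V)
  obtain ⟨e₀, -, -, he₀NE⟩ := exists_cover T v₀
  obtain ⟨w₁, hw₁NE, hw₁Sat, -⟩ :=
    saturate T ((Set.range T.part \ MTourAux.covSet T e₀).ncard) e₀ he₀NE le_rfl
  -- from any saturated non-eclipsed vertex, there is another one pecking it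
  have next : ∀ w, T.nonEclipsed w →
      ∃ w', T.nonEclipsed w' ∧ MTourAux.Sat T w' ∧ T.peck w' w := by
    intro w hwNE
    obtain ⟨z, hzp, hz2⟩ := hF w
    have hzw : T.peck z w := peck_back T hzp hz2
    obtain ⟨e, -, hesub, heNE⟩ := exists_cover T z
    have hew : T.peck e w := hesub w hzw
    obtain ⟨w', hNE', hSat', hanchor⟩ :=
      saturate T ((Set.range T.part \ MTourAux.covSet T e).ncard) e heNE le_rfl
    exact ⟨w', hNE', hSat', hanchor w hwNE hew⟩
  obtain ⟨w₂, hw₂NE, hw₂Sat, hp21⟩ := next w₁ hw₁NE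
  obtain ⟨w₃, hw₃NE, hw₃Sat, hp32⟩ := next w₂ hw₂NE
  refine ⟨w₃, w₂, w₁, ?_, ?_, ?_, sat_isDuke T hw₃Sat, sat_isDuke T hw₂Sat, sat_isDuke T hw₁Sat⟩
  · intro h
    exact T.asymm _ _ hp32 (h ▸ hp32)
  · intro h
    exact T.asymm _ _ hp32 (h ▸ hp21)
  · intro h
    exact T.asymm _ _ hp21 (h ▸ hp21)
end

section
/- In any multipartite tournament with no 2-Duke that contains at least three distinct 3-Dukes, there exists a fourth distinct 3-Duke. -/
/-!
Call `u` far from `d` if `u` lies outside the partite set of `d` and `d` does not reach `u` in at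
most two steps; then `u` pecks `d`. Far-from is asymmetric and has no directed triangle, so it
suffices to find, for every vertex `d`, a 3-Duke far from `d`: three vertices cannot all have
their 3-Duke among the other two.

Replacing `d` by a non-eclipsed vertex of its partite set with a larger out-neighbourhood only
shrinks the set of vertices far from `d`, so `d` may be assumed non-eclipsed. Take `u` far from
`d` with a maximal `nearSet`. If some `c` outside the partite set of `u` is not reached from `u`
in three steps, then `c` pecks everything `u` reaches in two steps outside its own partite set.
If `c` is in the partite set of `d` this makes `c` eclipse `d`; otherwise `c` is far from `d`
and its `nearSet` is strictly larger. Hence `u` is a 3-Duke.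
-/

namespace MTour

variable {V ι : Type*} {T : MTour V ι} {m : ℕ} {c d e u w : V}

lemma hasPath_refl (m : ℕ) (d : V) : T.hasPath m d d :=
  ⟨0, Nat.zero_le m, fun _ => d, rfl, rfl, fun _ h => absurd h (Nat.not_lt_zero _)⟩

lemma hasPath_zero : T.hasPath 0 d c ↔ c = d := by
  refine ⟨fun ⟨k, hk, f, h0, hk', _⟩ => ?_, by rintro rfl; exact hasPath_refl 0 _⟩
  obtain rfl : k = 0 := Nat.le_zero.mp hk
  exact hk'.symm.trans h0

lemma hasPath_succ :
    T.hasPath (m + 1) d c ↔ c = d ∨ ∃ w, T.peck d w ∧ T.hasPath m w c := by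
  constructor
  · rintro ⟨_ | k, hk, f, h0, hk', hp⟩
    · exact Or.inl (hk'.symm.trans h0)
    · exact Or.inr ⟨f 1, h0 ▸ hp 0 (by omega),
        k, by omega, fun i => f (i + 1), rfl, hk', fun i hi => hp (i + 1) (by omega)⟩
  · rintro (rfl | ⟨w, hdw, k, hk, f, h0, hk', hp⟩)
    · exact hasPath_refl _ _
    · refine ⟨k + 1, by omega, fun i => if i = 0 then d else f (i - 1), by simp, by simpa, ?_⟩
      rintro (_ | i) hi
      · simpa [h0] using hdw
      · simpa using hp i (by omega)

lemma hasPath_cons (hdw : T.peck d w) (hw : T.hasPath m w c) : T.hasPath (m + 1) d c :=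
  hasPath_succ.2 (Or.inr ⟨w, hdw, hw⟩)

lemma hasPath_of_peck_s7 (h : T.peck d c) : T.hasPath (m + 1) d c :=
  hasPath_cons h (hasPath_refl m c)

lemma hasPath_snoc (hw : T.hasPath m d w) (hwc : T.peck w c) : T.hasPath (m + 1) d c := by
  induction m generalizing d with
  | zero =>
    obtain rfl := hasPath_zero.1 hw
    exact hasPath_of_peck_s7 hwc
  | succ m ih =>
    rcases hasPath_succ.1 hw with rfl | ⟨v, hdv, hv⟩
    · exact hasPath_of_peck_s7 hwc
    · exact hasPath_cons hdv (ih hv)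

lemma peck_of_not_hasPath_succ_s7 (hw : T.hasPath m u w) (hwc : T.part w ≠ T.part c)
    (hc : ¬ T.hasPath (m + 1) u c) : T.peck c w :=
  (T.complete c w hwc.symm).resolve_right fun h => hc (hasPath_snoc hw h)

lemma hasPath_of_peck_subset (hde : ∀ z, T.peck d z → T.peck e z) (h : T.hasPath m d c) :
    c = d ∨ T.hasPath m e c := by
  cases m with
  | zero => exact Or.inl (hasPath_zero.1 h)
  | succ m =>
    rcases hasPath_succ.1 h with rfl | ⟨w, hdw, hw⟩
    · exact Or.inl rfl
    · exact Or.inr (hasPath_cons (hde w hdw) hw)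

variable (T) in
def FarFrom (d u : V) : Prop :=
  T.part u ≠ T.part d ∧ ¬ T.hasPath 2 d u

lemma FarFrom.peck (h : T.FarFrom d u) : T.peck u d :=
  peck_of_not_hasPath_succ_s7 (hasPath_refl 1 d) h.1.symm h.2

lemma FarFrom.of_peck_subset (hed : T.part e = T.part d) (hde : ∀ z, T.peck d z → T.peck e z)
    (h : T.FarFrom e u) : T.FarFrom d u := by
  refine ⟨hed ▸ h.1, fun hdu => ?_⟩
  rcases hasPath_of_peck_subset hde hdu with rfl | heu
  · exact h.1 hed.symm
  · exact h.2 heu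

lemma not_farFrom_self : ¬ T.FarFrom d d :=
  fun h => h.1 rfl

lemma FarFrom.not_farFrom (h : T.FarFrom d u) : ¬ T.FarFrom u d :=
  fun h' => T.asymm _ _ h.peck h'.peck

lemma FarFrom.not_farFrom_of_farFrom (hdu : T.FarFrom d u) (huc : T.FarFrom u c) :
    ¬ T.FarFrom c d :=
  fun hcd => hdu.2 (hasPath_cons hcd.peck (hasPath_of_peck_s7 huc.peck))

variable (T) in
def nearSet (u : V) : Set V :=
  {s | T.peck u s ∨ (T.part s = T.part u ∧ T.hasPath 2 u s)}

lemma nearSet_ssubset (hcu : T.part c ≠ T.part u) (hc : ¬ T.hasPath 3 u c) :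
    T.nearSet u ⊂ T.nearSet c := by
  have hpeck : ∀ s, T.hasPath 2 u s → T.part s ≠ T.part c → T.peck c s :=
    fun s hs hsc => peck_of_not_hasPath_succ_s7 hs hsc hc
  have hcu' : T.peck c u := hpeck u (hasPath_refl 2 u) hcu.symm
  refine ⟨fun s hs => ?_, fun hsub => ?_⟩
  · rcases hs with hus | ⟨hsu, hs⟩
    · by_cases hsc : T.part s = T.part c
      · exact Or.inr ⟨hsc, hasPath_cons hcu' (hasPath_of_peck_s7 hus)⟩
      · exact Or.inl (hpeck s (hasPath_of_peck_s7 hus) hsc)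
    · exact Or.inl (hpeck s hs (hsu.trans_ne hcu.symm))
  · rcases hsub (Or.inr ⟨rfl, hasPath_refl 2 c⟩) with huc | ⟨hcu'', -⟩
    · exact hc (hasPath_of_peck_s7 huc)
    · exact hcu hcu''

lemma eclipses_of_not_hasPath_three (hu : T.FarFrom d u) (hcd : T.part c = T.part d)
    (hcu : T.part c ≠ T.part u) (hc : ¬ T.hasPath 3 u c) : T.eclipses c d := by
  refine ⟨hcd, fun z hz => ?_, u, ?_, fun hdu => hu.2 (hasPath_of_peck_s7 hdu)⟩
  · have hzc : T.part z ≠ T.part c := hcd ▸ (T.inter d z hz).symm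
    exact peck_of_not_hasPath_succ_s7 (hasPath_cons hu.peck (hasPath_of_peck_s7 hz)) hzc hc
  · exact peck_of_not_hasPath_succ_s7 (hasPath_refl 2 u) hcu.symm hc

theorem exists_farFrom_isDuke_three_of_nonEclipsed [Finite V] (hd : T.nonEclipsed d)
    (hd2 : ¬ T.isDuke 2 d) : ∃ u, T.FarFrom d u ∧ T.isDuke 3 u := by
  have hfar : {u | T.FarFrom d u}.Nonempty := by
    simpa [isDuke, FarFrom, Set.Nonempty] using hd2
  obtain ⟨u, hu, hmax⟩ := (Set.toFinite _).exists_maximalFor T.nearSet _ hfar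
  refine ⟨u, hu, fun c hcu => by_contra fun hc => ?_⟩
  by_cases hcd : T.part c = T.part d
  · exact hd c (eclipses_of_not_hasPath_three hu hcd hcu hc)
  · have hcfar : T.FarFrom d c := ⟨hcd, fun h => hc (hasPath_cons hu.peck h)⟩
    have hlt := nearSet_ssubset hcu hc
    exact hlt.not_subset (hmax hcfar hlt.subset)

variable (T) in
lemma exists_nonEclipsed_peck_superset [Finite V] (d : V) :
    ∃ e, T.part e = T.part d ∧ (∀ z, T.peck d z → T.peck e z) ∧ T.nonEclipsed e := by
  obtain ⟨e, ⟨hed, hde⟩, hmax⟩ :=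
    (Set.toFinite {e | T.part e = T.part d ∧ ∀ z, T.peck d z → T.peck e z}).exists_maximalFor
      (fun e => {z | T.peck e z}) _ ⟨d, rfl, fun _ => id⟩
  refine ⟨e, hed, hde, fun f ⟨hfe, hef, z, hfz, hez⟩ => hez ?_⟩
  exact hmax ⟨hfe.trans hed, fun z hz => hef z (hde z hz)⟩ hef hfz

variable (T) in
theorem exists_farFrom_isDuke_three [Finite V] (hno2 : ¬ ∃ d, T.isDuke 2 d) (d : V) :
    ∃ u, T.FarFrom d u ∧ T.isDuke 3 u := by
  obtain ⟨e, hed, hde, he⟩ := T.exists_nonEclipsed_peck_superset d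
  obtain ⟨u, hu, hu3⟩ := exists_farFrom_isDuke_three_of_nonEclipsed he fun h => hno2 ⟨e, h⟩
  exact ⟨u, hu.of_peck_subset hed hde, hu3⟩

end MTour

theorem stmt7_general {V ι : Type*} [Finite V] (T : MTour V ι)
    (hno2 : ¬ ∃ d, T.isDuke 2 d)
    (d₁ d₂ d₃ : V) :
    ∃ d₄, d₄ ≠ d₁ ∧ d₄ ≠ d₂ ∧ d₄ ≠ d₃ ∧ T.isDuke 3 d₄ := by
  obtain ⟨u₁, h₁, hu₁⟩ := T.exists_farFrom_isDuke_three hno2 d₁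
  obtain ⟨u₂, h₂, hu₂⟩ := T.exists_farFrom_isDuke_three hno2 d₂
  obtain ⟨u₃, h₃, hu₃⟩ := T.exists_farFrom_isDuke_three hno2 d₃
  by_contra! h
  have hmem : ∀ u, T.isDuke 3 u → u = d₁ ∨ u = d₂ ∨ u = d₃ := fun u hu => by
    by_contra! h'
    exact h u h'.1 h'.2.1 h'.2.2 hu
  rcases hmem u₁ hu₁ with rfl | rfl | rfl <;> rcases hmem u₂ hu₂ with rfl | rfl | rfl <;>
    rcases hmem u₃ hu₃ with rfl | rfl | rfl <;>
    solve_by_elim [MTour.not_farFrom_self, MTour.FarFrom.not_farFrom,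
      MTour.FarFrom.not_farFrom_of_farFrom]

/-- In a multipartite tournament with no 2-Duke containing three distinct
3-Dukes, there is a fourth distinct 3-Duke. -/
theorem stmt7 {V ι : Type*} [Finite V] (T : MTour V ι)
    (hno2 : ¬ ∃ d, T.isDuke 2 d)
    (d₁ d₂ d₃ : V) (h12 : d₁ ≠ d₂) (h13 : d₁ ≠ d₃) (h23 : d₂ ≠ d₃)
    (hd₁ : T.isDuke 3 d₁) (hd₂ : T.isDuke 3 d₂) (hd₃ : T.isDuke 3 d₃) :
    ∃ d₄, d₄ ≠ d₁ ∧ d₄ ≠ d₂ ∧ d₄ ≠ d₃ ∧ T.isDuke 3 d₄ :=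
  stmt7_general T hno2 d₁ d₂ d₃
end

section
/- If a multipartite tournament contains an m-Duke in some partite set F, then F contains a non-eclipsed m-Duke. Moreover, if some vertex c is pecked by an m-Duke, then c is pecked by a non-eclipsed m-Duke. -/
/-!
Replacing a vertex `d` by a vertex `e` of the same partite set that pecks everything `d` pecks
preserves being an `m`-Duke: a path leaving `d` starts with an arc `d → x`, and `e → x` is an arc
too. Among such vertices `e`, one whose out-neighbourhood is maximal for inclusion exists because
`V` is finite, and it cannot be eclipsed, since an eclipsing vertex would again be such an `e` with
a strictly larger out-neighbourhood.
-/

namespace MTour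

variable {V ι : Type*} (T : MTour V ι)

theorem hasPath_of_forall_peck_imp {m : ℕ} {d e c : V} (hde : ∀ x, T.peck d x → T.peck e x)
    (hcd : c ≠ d) (h : T.hasPath m d c) : T.hasPath m e c := by
  obtain ⟨k, hk, f, hf0, hfk, hstep⟩ := h
  have hk0 : k ≠ 0 := by
    rintro rfl
    exact hcd (hfk.symm.trans hf0)
  refine ⟨k, hk, Function.update f 0 e, by simp, by simpa [hk0] using hfk, fun i hi => ?_⟩
  rcases i with _ | i
  · simpa using hde _ (hf0 ▸ hstep 0 hi)
  · simpa using hstep (i + 1) hi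

theorem isDuke_of_forall_peck_imp {m : ℕ} {d e : V} (hpart : T.part e = T.part d)
    (hde : ∀ x, T.peck d x → T.peck e x) (hd : T.isDuke m d) : T.isDuke m e := by
  intro c hc
  rw [hpart] at hc
  exact T.hasPath_of_forall_peck_imp hde (fun h => hc (congrArg T.part h)) (hd c hc)

theorem exists_nonEclipsed_forall_peck_imp [Finite V] (d : V) :
    ∃ e, T.part e = T.part d ∧ (∀ x, T.peck d x → T.peck e x) ∧ T.nonEclipsed e := by
  let S : Set V := {e | T.part e = T.part d ∧ ∀ x, T.peck d x → T.peck e x}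
  obtain ⟨e, ⟨hpart, hde⟩, hmax⟩ :=
    S.toFinite.exists_maximalFor (fun v => {x | T.peck v x}) S ⟨d, rfl, fun _ h => h⟩
  refine ⟨e, hpart, hde, ?_⟩
  rintro e' ⟨hpart', he, c, hc, hnc⟩
  have he'S : e' ∈ S := ⟨hpart'.trans hpart, fun x hx => he x (hde x hx)⟩
  exact hnc (hmax he'S (fun x hx => he x hx) hc)

end MTour

/-- If some partite set contains an `m`-Duke, it contains a non-eclipsed
`m`-Duke; moreover any vertex pecked by an `m`-Duke is pecked by a
non-eclipsed `m`-Duke. -/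
theorem stmt9 {V ι : Type*} [Finite V] (T : MTour V ι) (m : ℕ) :
    (∀ d, T.isDuke m d →
      ∃ e, T.part e = T.part d ∧ T.isDuke m e ∧ T.nonEclipsed e) ∧
    (∀ d c, T.isDuke m d → T.peck d c →
      ∃ e, T.isDuke m e ∧ T.nonEclipsed e ∧ T.peck e c) := by
  constructor
  · intro d hd
    obtain ⟨e, hpart, hde, hne⟩ := T.exists_nonEclipsed_forall_peck_imp d
    exact ⟨e, hpart, T.isDuke_of_forall_peck_imp hpart hde hd, hne⟩
  · intro d c hd hdc
    obtain ⟨e, hpart, hde, hne⟩ := T.exists_nonEclipsed_forall_peck_imp d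
    exact ⟨e, T.isDuke_of_forall_peck_imp hpart hde hd, hne, hde c hdc⟩
end
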